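/- arXiv:0903.5013 — 4 statements merged into one kernel-verified Lean document; each statement's English description precedes it below -/
import Mathlib

section
/- Let R be a commutative ring and x ∈ R a regular (non-zerodivisor) element. Then there is a short exact sequence of R⋈xR-modules 0 → R → R⋈xR → 0×xR → 0, where μ : R → R⋈xR is given by μ(r) = (rx, 0), ν : R⋈xR → 0×xR is given by ν(r, r+xr') = (0, (r+xr')x), R is an R⋈xR-module via the homomorphism ε(r,r+xr') = r, and 0×xR is an ideal of R⋈xR. -/
def amalg (R : Type*) [CommRing R] (I : Ideal R) : Subalgebra R (R × R) where
  carrier := {p | ∃ r : R, ∃ e ∈ I, p = (r, r + e)}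
  mul_mem' := by
    rintro p q ⟨r, e, he, rfl⟩ ⟨s, f, hf, rfl⟩
    exact ⟨r * s, r * f + s * e + e * f,
      add_mem (add_mem (I.mul_mem_left r hf) (I.mul_mem_left s he)) (I.mul_mem_right f he),
      by simp [Prod.ext_iff]; ring⟩
  add_mem' := by
    rintro p q ⟨r, e, he, rfl⟩ ⟨s, f, hf, rfl⟩
    exact ⟨r + s, e + f, add_mem he hf, by simp [Prod.ext_iff]; ring⟩
  algebraMap_mem' := fun r => ⟨r, 0, zero_mem I, by simp⟩

def gx (R : Type*) [CommRing R] (x : R) : amalg R (Ideal.span {x}) :=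
  ⟨(0, x), 0, x, Ideal.mem_span_singleton_self x, by simp⟩

def gx2 (R : Type*) [CommRing R] (x : R) : amalg R (Ideal.span {x}) :=
  ⟨(0, x ^ 2), 0, x ^ 2, Ideal.mem_span_singleton.mpr ⟨x, sq x⟩, by simp⟩

def epsHom (R : Type*) [CommRing R] (x : R) : amalg R (Ideal.span {x}) →+* R where
  toFun p := (p : R × R).1
  map_one' := rfl
  map_mul' _ _ := rfl
  map_zero' := rfl
  map_add' _ _ := rfl

/-!
Cancelling the regular element `x` gives injectivity of `μ r = (r x, 0)` and turns `ν p = 0`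
into `p.2 = 0`; an element `(r, r + e)` of `R⋈xR` with `r + e = 0` has `r = -e ∈ xR`, so it is
`μ` of something.
-/

namespace amalg

variable {R : Type*} [CommRing R]

theorem mem_iff {I : Ideal R} {p : R × R} : p ∈ amalg R I ↔ p.2 - p.1 ∈ I := by
  constructor
  · rintro ⟨r, e, he, rfl⟩
    simpa using he
  · intro h
    exact ⟨p.1, p.2 - p.1, h, by simp⟩

variable (x : R)

def mu (r : R) : amalg R (Ideal.span {x}) :=
  ⟨(r * x, 0), mem_iff.2 <| by
    simpa using Ideal.mul_mem_left _ r (Ideal.mem_span_singleton_self x)⟩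

def nu (p : amalg R (Ideal.span {x})) : amalg R (Ideal.span {x}) :=
  ⟨(0, (p : R × R).2 * x), mem_iff.2 <| by
    simpa using Ideal.mul_mem_left _ (p : R × R).2 (Ideal.mem_span_singleton_self x)⟩

@[simp]
theorem coe_mu (r : R) : (mu x r : R × R) = (r * x, 0) := rfl

@[simp]
theorem coe_nu (p : amalg R (Ideal.span {x})) :
    (nu x p : R × R) = (0, (p : R × R).2 * x) := rfl

theorem mu_add (r r' : R) : mu x (r + r') = mu x r + mu x r' :=
  Subtype.ext <| Prod.ext (add_mul r r' x) (add_zero 0).symm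

theorem mu_fst_mul (p : amalg R (Ideal.span {x})) (r : R) :
    mu x ((p : R × R).1 * r) = p * mu x r :=
  Subtype.ext <| Prod.ext (mul_assoc _ r x) (mul_zero _).symm

theorem nu_add (p q : amalg R (Ideal.span {x})) : nu x (p + q) = nu x p + nu x q :=
  Subtype.ext <| Prod.ext (add_zero 0).symm (add_mul _ _ x)

theorem nu_mul (p q : amalg R (Ideal.span {x})) : nu x (p * q) = p * nu x q :=
  Subtype.ext <| Prod.ext (mul_zero _).symm (mul_assoc _ _ x)

variable {x}

theorem mu_injective (hx : x ∈ nonZeroDivisors R) : Function.Injective (mu x) := fun _ _ h =>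
  (mul_cancel_right_mem_nonZeroDivisors hx).1 (congrArg (fun p : amalg R _ => (p : R × R).1) h)

theorem exists_mu_eq_iff {p : amalg R (Ideal.span {x})} :
    (∃ r, mu x r = p) ↔ (p : R × R).2 = 0 := by
  constructor
  · rintro ⟨r, rfl⟩
    rfl
  · intro hp
    have hmem : (p : R × R).1 ∈ Ideal.span {x} := by
      simpa [hp] using mem_iff.1 p.2
    obtain ⟨r, hr⟩ := Ideal.mem_span_singleton'.1 hmem
    exact ⟨r, Subtype.ext <| Prod.ext hr hp.symm⟩

theorem nu_eq_zero_iff (hx : x ∈ nonZeroDivisors R) {p : amalg R (Ideal.span {x})} :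
    nu x p = 0 ↔ (p : R × R).2 = 0 := by
  rw [← mul_right_mem_nonZeroDivisors_eq_zero_iff hx, ← Subtype.coe_inj, coe_nu]
  simp

theorem range_nu :
    Set.range (nu x) = {p : amalg R (Ideal.span {x}) | ∃ r', (p : R × R) = (0, x * r')} := by
  ext p
  constructor
  · rintro ⟨q, rfl⟩
    exact ⟨(q : R × R).2, by simp [mul_comm]⟩
  · rintro ⟨r', hp⟩
    refine ⟨algebraMap R _ r', Subtype.ext ?_⟩
    simp [hp, mul_comm]

end amalg

/-- for x regular, there is a short exact sequence of R⋈xR-modules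
0 → R → R⋈xR → 0×xR → 0 with μ(r) = (rx,0) and ν(r,r+xr') = (0,(r+xr')x),
where R is an R⋈xR-module via ε(r,r+xr') = r. -/
theorem ses_R_S_ideal (R : Type*) [CommRing R] (x : R) (hx : x ∈ nonZeroDivisors R) :
    ∃ (μ : R → amalg R (Ideal.span {x}))
      (ν : amalg R (Ideal.span {x}) → amalg R (Ideal.span {x})),
      (∀ r : R, (μ r : R × R) = (r * x, 0)) ∧
      (∀ p : amalg R (Ideal.span {x}), (ν p : R × R) = (0, (p : R × R).2 * x)) ∧
      (∀ r r' : R, μ (r + r') = μ r + μ r') ∧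
      (∀ (p : amalg R (Ideal.span {x})) (r : R), μ ((p : R × R).1 * r) = p * μ r) ∧
      (∀ p q : amalg R (Ideal.span {x}), ν (p + q) = ν p + ν q) ∧
      (∀ p q : amalg R (Ideal.span {x}), ν (p * q) = p * ν q) ∧
      Function.Injective μ ∧
      (∀ p : amalg R (Ideal.span {x}), ν p = 0 ↔ ∃ r : R, μ r = p) ∧
      Set.range ν = {p : amalg R (Ideal.span {x}) | ∃ r' : R, (p : R × R) = (0, x * r')} :=
  ⟨amalg.mu x, amalg.nu x, amalg.coe_mu x, amalg.coe_nu x, amalg.mu_add x, amalg.mu_fst_mul x,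
    amalg.nu_add x, amalg.nu_mul x, amalg.mu_injective hx,
    fun _ => (amalg.nu_eq_zero_iff hx).trans amalg.exists_mu_eq_iff.symm, amalg.range_nu⟩
end

section
/- Let R be a commutative ring and x ∈ R a nonunit regular element. Then the ideal 0×xR = (0,x)·(R⋈xR) is not a direct summand of R⋈xR as an R⋈xR-module. Equivalently, there is no element (r, r+xr') ∈ R⋈xR with (0,x²)(r, r+xr') = (0,x). -/
set_option synthInstance.maxHeartbeats 1000000

/-!
A principal ideal `(a)` that is a direct summand of a commutative ring is generated by an
idempotent, so in particular `a ∈ (a²)`. For `a = (0, x)` in `R ⋈ xR` this would give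
`x² y = x` for some `y`, and cancelling the regular element `x` makes `x` a unit.
-/

/-- Writing `1 = j + k` along the decomposition, `a k` lies in both summands, so `a = a j`. -/
theorem Ideal.exists_mul_self_mul_eq_of_isCompl_span_singleton {A : Type*} [CommRing A] {a : A}
    {K : Submodule A A} (hK : IsCompl (Ideal.span {a}) K) : ∃ q, a * a * q = a := by
  obtain ⟨j, k, hj, hk, hjk⟩ := Submodule.codisjoint_iff_exists_add_eq.mp hK.codisjoint 1
  have hak : a * k ∈ Ideal.span {a} ⊓ K :=
    ⟨Ideal.mul_mem_right _ _ (Ideal.mem_span_singleton_self a), K.smul_mem a hk⟩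
  rw [hK.inf_eq_bot, Submodule.mem_bot] at hak
  obtain ⟨q, rfl⟩ := Ideal.mem_span_singleton.mp hj
  exact ⟨q, by linear_combination a * hjk - hak⟩

theorem isUnit_of_sq_mul_eq_self {R : Type*} [CommRing R] {x y : R}
    (hx : x ∈ nonZeroDivisors R) (h : x ^ 2 * y = x) : IsUnit x :=
  .of_mul_eq_one y <| sub_eq_zero.mp <| hx.2 _ <| by linear_combination h

theorem gx_mul_self (R : Type*) [CommRing R] (x : R) : gx R x * gx R x = gx2 R x :=
  Subtype.ext <| Prod.ext (zero_mul 0) (sq x).symm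

theorem not_exists_gx2_mul_eq_gx {R : Type*} [CommRing R] {x : R}
    (hx : x ∈ nonZeroDivisors R) (hxu : ¬IsUnit x) :
    ¬∃ p : amalg R (Ideal.span {x}), gx2 R x * p = gx R x := by
  rintro ⟨p, hp⟩
  exact hxu <| isUnit_of_sq_mul_eq_self hx <| congrArg (fun q : amalg R _ ↦ (q : R × R).2) hp

/-- for x a nonunit regular element, the ideal 0×xR = (0,x)·(R⋈xR) is not a
direct summand of R⋈xR; equivalently there is no p ∈ R⋈xR with (0,x²)·p = (0,x). -/
theorem ideal_not_direct_summand (R : Type*) [CommRing R] (x : R)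
    (hx : x ∈ nonZeroDivisors R) (hxu : ¬IsUnit x) :
    (¬∃ K : Submodule (amalg R (Ideal.span {x})) (amalg R (Ideal.span {x})),
        IsCompl (Ideal.span {gx R x} : Submodule (amalg R (Ideal.span {x}))
          (amalg R (Ideal.span {x}))) K) ∧
    ¬∃ p : amalg R (Ideal.span {x}), gx2 R x * p = gx R x := by
  have hno := not_exists_gx2_mul_eq_gx hx hxu
  refine ⟨fun ⟨K, hK⟩ ↦ hno ?_, hno⟩
  obtain ⟨q, hq⟩ := Ideal.exists_mul_self_mul_eq_of_isCompl_span_singleton hK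
  exact ⟨q, by rw [← gx_mul_self, hq]⟩
end

section
/- If R is an integral domain and x ∈ R, x ≠ 0, then the ring R⋈xR is reduced. -/
theorem amalg_isReduced_general (R : Type*) [CommRing R] [IsDomain R] (x : R) :
    IsReduced (amalg R (Ideal.span {x})) :=
  isReduced_of_injective (amalg R (Ideal.span {x})).val Subtype.val_injective

/-- if R is an integral domain and x ≠ 0, then R⋈xR is reduced. -/
theorem amalg_isReduced (R : Type*) [CommRing R] [IsDomain R] (x : R) (hx : x ≠ 0) :
    IsReduced (amalg R (Ideal.span {x})) :=
  amalg_isReduced_general R x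
end

section
/- Let R be a commutative ring containing a nonunit regular element x. Then the weak (global) dimension of R⋈xR is infinite. -/
/-!
In `S = R ⋈ xR` the elements `g = (0, x)` and `h = (x, 0)` satisfy `g * h = 0`, and since `x` is
regular their annihilators are `Ann g = (h)` and `Ann h = (g)`; the ideal `(g, h)` is proper as the
first projection maps it into `(x)`. Hence `S ⧸ (h)` has the `2`-periodic free resolution
`⋯ → S --g--> S --h--> S --g--> S --h--> S`, and tensoring it with `S ⧸ (g)` shows that
`Tor_{2n+2}(S ⧸ (g), S ⧸ (h)) ≅ S ⧸ (g, h) ≠ 0` for every `n`.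
-/

open CategoryTheory MonoidalCategory
open scoped TensorProduct

namespace ExactZeroDivisors

universe u

variable {S : Type u} [CommRing S] {g h : S}

structure IsExactPair (g h : S) : Prop where
  mul_eq_zero : g * h = 0
  dvd_of_left_mul_eq_zero : ∀ a : S, g * a = 0 → h ∣ a
  dvd_of_right_mul_eq_zero : ∀ a : S, h * a = 0 → g ∣ a

lemma IsExactPair.symm (hp : IsExactPair g h) : IsExactPair h g :=
  ⟨mul_comm g h ▸ hp.mul_eq_zero, hp.dvd_of_right_mul_eq_zero, hp.dvd_of_left_mul_eq_zero⟩

lemma smul_id_comp_smul_id (hgh : g * h = 0) :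
    (g • 𝟙 (ModuleCat.of S S)) ≫ (h • 𝟙 (ModuleCat.of S S)) = 0 := by
  rw [Linear.smul_comp, Linear.comp_smul, Category.comp_id, smul_smul, hgh, zero_smul]

lemma IsExactPair.exact_smul_id (hp : IsExactPair g h) :
    (ShortComplex.mk _ _ (smul_id_comp_smul_id hp.symm.mul_eq_zero)).Exact :=
  (ShortComplex.moduleCat_exact_iff _).2 fun a ha =>
    (hp.dvd_of_left_mul_eq_zero a ha).imp fun _ hb => hb.symm

variable (g h) in
noncomputable def periodicComplex (hgh : g * h = 0) : ChainComplex (ModuleCat.{u} S) ℕ :=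
  HomologicalComplex.alternatingConst (ModuleCat.of S S)
    (smul_id_comp_smul_id hgh) (smul_id_comp_smul_id (mul_comm g h ▸ hgh))
    fun _ _ => ComplexShape.down_nat_odd_add

lemma IsExactPair.periodicComplex_exactAt_succ (hp : IsExactPair g h) (n : ℕ) :
    (periodicComplex g h hp.mul_eq_zero).ExactAt (n + 1) := by
  rw [HomologicalComplex.exactAt_iff' _ (n + 2) (n + 1) n (by simp) (by simp)]
  rcases Nat.even_or_odd (n + 1) with hn | hn
  · exact (ShortComplex.exact_iff_of_iso
      (HomologicalComplex.alternatingConstScIsoEven _ _ _ _ rfl rfl hn)).2 hp.exact_smul_id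
  · exact (ShortComplex.exact_iff_of_iso
      (HomologicalComplex.alternatingConstScIsoOdd _ _ _ _ rfl rfl hn)).2 hp.symm.exact_smul_id

lemma periodicComplex_d_one_zero_comp_mkQ (hgh : g * h = 0) :
    (periodicComplex g h hgh).d 1 0 ≫ ModuleCat.ofHom (Ideal.span {h}).mkQ = 0 :=
  ModuleCat.hom_ext <| LinearMap.ext fun a =>
    (Submodule.Quotient.mk_eq_zero _).2 (Ideal.mem_span_singleton.2 ⟨a, rfl⟩)

noncomputable def IsExactPair.periodicResolution (hp : IsExactPair g h) :
    ProjectiveResolution (ModuleCat.of S (S ⧸ Ideal.span {h})) where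
  complex := periodicComplex g h hp.mul_eq_zero
  projective _ := ModuleCat.projective_of_free (Module.Basis.singleton PUnit.{u + 1} S)
  π := (ChainComplex.toSingle₀Equiv _ _).symm ⟨_, periodicComplex_d_one_zero_comp_mkQ _⟩
  quasiIso := ⟨fun
    | 0 => by
      rw [ChainComplex.quasiIsoAt₀_iff, ShortComplex.quasiIso_iff_of_zeros' _ rfl rfl rfl]
      refine ⟨?_, (ModuleCat.epi_iff_surjective _).2 (Submodule.mkQ_surjective _)⟩
      rw [ShortComplex.moduleCat_exact_iff]
      intro (a : S) (ha : Submodule.Quotient.mk a = (0 : S ⧸ Ideal.span {h}))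
      obtain ⟨b, rfl⟩ := Ideal.mem_span_singleton.1 ((Submodule.Quotient.mk_eq_zero _).1 ha)
      exact ⟨b, rfl⟩
    | n + 1 => by
      rw [quasiIsoAt_iff_exactAt' (hL := ChainComplex.exactAt_succ_single_obj ..)]
      exact hp.periodicComplex_exactAt_succ n⟩

lemma span_pair_eq_top_of_smul_eq_mk_one_tmul_one {z : (S ⧸ Ideal.span {g}) ⊗[S] S}
    (hz : h • z = Submodule.Quotient.mk 1 ⊗ₜ 1) : Ideal.span {g, h} = ⊤ := by
  obtain ⟨b, hb⟩ := Submodule.Quotient.mk_surjective _ (TensorProduct.rid S _ z)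
  have hhb : (Submodule.Quotient.mk (h • b) : S ⧸ Ideal.span {g}) = Submodule.Quotient.mk 1 := by
    rw [Submodule.Quotient.mk_smul, hb, ← map_smul, hz, TensorProduct.rid_tmul, one_smul]
  obtain ⟨a, ha⟩ := Ideal.mem_span_singleton.1 ((Submodule.Quotient.eq _).1 hhb)
  exact (Ideal.eq_top_iff_one _).2 (Ideal.mem_span_pair.2 ⟨-a, b, by linear_combination ha⟩)

lemma smul_mk_one_tmul_one_eq_zero : g • (Submodule.Quotient.mk 1 ⊗ₜ[S] (1 : S) :
    (S ⧸ Ideal.span {g}) ⊗[S] S) = 0 := by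
  rw [TensorProduct.smul_tmul', ← Submodule.Quotient.mk_smul, smul_eq_mul, mul_one,
    (Submodule.Quotient.mk_eq_zero _).2 (Ideal.mem_span_singleton_self g), TensorProduct.zero_tmul]

theorem IsExactPair.not_subsingleton_tor_quotient (hp : IsExactPair g h)
    (hspan : Ideal.span {g, h} ≠ ⊤) (n : ℕ) :
    ¬Subsingleton (((Tor (ModuleCat.{u} S) (2 * n + 2)).obj
      (ModuleCat.of S (S ⧸ Ideal.span {g}))).obj (ModuleCat.of S (S ⧸ Ideal.span {h}))) := by
  intro hTor
  let F := (tensoringLeft (ModuleCat.{u} S)).obj (ModuleCat.of S (S ⧸ Ideal.span {g}))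
  let P := hp.periodicResolution
  have hexactAt : ((F.mapHomologicalComplex _).obj P.complex).ExactAt (2 * n + 2) :=
    (HomologicalComplex.exactAt_iff_isZero_homology _ _).2
      ((@ModuleCat.isZero_of_subsingleton _ _ _ hTor).of_iso (P.isoLeftDerivedObj F _).symm)
  -- in degrees `2n + 3 → 2n + 2 → 2n + 1` the resolution is `S --h--> S --g--> S`
  have hexact : (F.mapShortComplex.obj
      (ShortComplex.mk _ _ (smul_id_comp_smul_id hp.symm.mul_eq_zero))).Exact := by
    rw [HomologicalComplex.exactAt_iff' _ (2 * n + 3) (2 * n + 2) (2 * n + 1) (by simp) (by simp)]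
      at hexactAt
    exact ShortComplex.exact_of_iso (F.mapShortComplex.mapIso
      (HomologicalComplex.alternatingConstScIsoEven _ (smul_id_comp_smul_id hp.mul_eq_zero) _
        (fun _ _ => ComplexShape.down_nat_odd_add) rfl rfl ⟨n + 1, by ring⟩)) hexactAt
  rw [ShortComplex.moduleCat_exact_iff] at hexact
  let y : (S ⧸ Ideal.span {g}) ⊗[S] S := Submodule.Quotient.mk 1 ⊗ₜ 1
  obtain ⟨z, hz⟩ := hexact y (by
    change (F.map (g • 𝟙 (ModuleCat.of S S))).hom y = 0
    rw [Functor.map_smul, CategoryTheory.Functor.map_id]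
    exact smul_mk_one_tmul_one_eq_zero)
  change (F.map (h • 𝟙 (ModuleCat.of S S))).hom z = y at hz
  rw [Functor.map_smul, CategoryTheory.Functor.map_id] at hz
  exact hspan (span_pair_eq_top_of_smul_eq_mk_one_tmul_one hz)

theorem IsExactPair.not_exists_forall_tor_subsingleton (hp : IsExactPair g h)
    (hspan : Ideal.span {g, h} ≠ ⊤) :
    ¬∃ n : ℕ, ∀ (M N : ModuleCat.{u} S) (i : ℕ), n < i →
      Subsingleton (((Tor (ModuleCat.{u} S) i).obj M).obj N) := fun ⟨n, hn⟩ =>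
  hp.not_subsingleton_tor_quotient hspan n (hn _ _ _ (by omega))

end ExactZeroDivisors

namespace amalg

universe u

variable {R : Type u} [CommRing R] {x : R}

variable (R x) in
def xZero : amalg R (Ideal.span {x}) :=
  ⟨(x, 0), x, -x, neg_mem (Ideal.mem_span_singleton_self x), by simp⟩

lemma exists_eq_mk (a : amalg R (Ideal.span {x})) : ∃ r c : R, (a : R × R) = (r, r + x * c) := by
  obtain ⟨r, e, he, hval⟩ := a.2
  obtain ⟨c, rfl⟩ := Ideal.mem_span_singleton.1 he
  exact ⟨r, c, hval⟩

lemma xZero_dvd_of_gx_mul_eq_zero (hx : x ∈ nonZeroDivisors R) (a : amalg R (Ideal.span {x}))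
    (ha : gx R x * a = 0) : xZero R x ∣ a := by
  obtain ⟨r, c, hval⟩ := exists_eq_mk a
  have hsnd : (r + x * c) * x = 0 := by
    simpa [gx, hval, mul_comm] using congrArg Prod.snd (Subtype.ext_iff.1 ha)
  obtain rfl : r = -(x * c) :=
    eq_neg_of_add_eq_zero_left (mem_nonZeroDivisors_iff_right.1 hx _ hsnd)
  exact ⟨algebraMap R _ (-c), Subtype.ext (by simp [xZero, hval])⟩

lemma gx_dvd_of_xZero_mul_eq_zero (hx : x ∈ nonZeroDivisors R) (a : amalg R (Ideal.span {x}))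
    (ha : xZero R x * a = 0) : gx R x ∣ a := by
  obtain ⟨r, c, hval⟩ := exists_eq_mk a
  have hfst : r * x = 0 := by
    simpa [xZero, hval, mul_comm] using congrArg Prod.fst (Subtype.ext_iff.1 ha)
  obtain rfl : r = 0 := mem_nonZeroDivisors_iff_right.1 hx _ hfst
  exact ⟨algebraMap R _ c, Subtype.ext (by simp [gx, hval])⟩

lemma span_gx_xZero_ne_top (hxu : ¬IsUnit x) : Ideal.span {gx R x, xZero R x} ≠ ⊤ := by
  intro htop
  obtain ⟨c, d, hcd⟩ := Ideal.mem_span_pair.1 ((Ideal.eq_top_iff_one _).1 htop)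
  exact hxu (IsUnit.of_mul_eq_one_right (epsHom R x d)
    (by simpa [epsHom, gx, xZero] using congrArg (epsHom R x) hcd))

lemma isExactPair_gx_xZero (hx : x ∈ nonZeroDivisors R) :
    ExactZeroDivisors.IsExactPair (gx R x) (xZero R x) :=
  ⟨Subtype.ext (by simp [gx, xZero]), xZero_dvd_of_gx_mul_eq_zero hx,
    gx_dvd_of_xZero_mul_eq_zero hx⟩

end amalg

/-- if x is a nonunit regular element of R, then the weak (global)
dimension of R⋈xR is infinite: no n bounds the flat dimension of all modules, i.e.
for no n do all Tor groups vanish in degrees above n. -/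
theorem wdim_amalg_infinite (R : Type u) [CommRing R] (x : R)
    (hx : x ∈ nonZeroDivisors R) (hxu : ¬IsUnit x) :
    ¬∃ n : ℕ, ∀ (M N : ModuleCat (amalg R (Ideal.span {x}))) (i : ℕ), n < i →
      Subsingleton (((Tor (ModuleCat (amalg R (Ideal.span {x}))) i).obj M).obj N) :=
  (amalg.isExactPair_gx_xZero hx).not_exists_forall_tor_subsingleton
    (amalg.span_gx_xZero_ne_top hxu)
end
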